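/- Let ε > 0 and T > 0. Let E : [0,T] × ℝ² → ℝ² be continuous, C¹ in x, with ∂_{x₂}E₁(t,x) = ∂_{x₁}E₂(t,x) for all (t,x). Let f : [0,T] × ℝ² × ℝ² → [0,∞) be C¹ with f(t,x,v) = 0 whenever |x| + |v| ≥ R for some fixed R > 0, and assume that for all (t,x,v), ∂_t f + (v/ε)·∇_x f + (E(t,x)/ε + v^⊥/ε²)·∇_v f = 0. Define ρ̄(t,x) = ∫_{ℝ²} f(t, x − ε v^⊥, v) dv. Then for every smooth compactly supported Φ : ℝ × ℝ² → ℝ and every t ∈ (0,T), d/dt ∫_{ℝ²} ρ̄(t,x) Φ(t,x) dx = ∫_{ℝ²} ρ̄(t,x) ∂_t Φ(t,x) dx + ∫_{ℝ²}∫_{ℝ²} f(t,x,v) ∇_x Φ(t, x + ε v^⊥) · (E(t,x))^⊥ dx dv. -/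

import Mathlib

set_option maxHeartbeats 2000000

open MeasureTheory

noncomputable abbrev R2 : Type := EuclideanSpace ℝ (Fin 2)

/-- For `w = (w₁, w₂) ∈ ℝ²`, `perp w = (−w₂, w₁)`. -/
noncomputable def perp (w : R2) : R2 := WithLp.toLp 2 ![-w 1, w 0]

noncomputable def perpL : R2 →L[ℝ] R2 :=
  LinearMap.toContinuousLinearMap
  { toFun := perp
    map_add' := by
      intro a b; ext i; fin_cases i <;>
        (simp [perp, PiLp.add_apply]; try ring)
    map_smul' := by
      intro c a; ext i; fin_cases i <;>
        (simp [perp, PiLp.smul_apply, mul_comm]; try ring) }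

lemma perpL_apply (w : R2) : perpL w = perp w := rfl

lemma continuous_perp : Continuous perp := perpL.continuous

lemma norm_perp (w : R2) : ‖perp w‖ = ‖w‖ := by
  rw [EuclideanSpace.norm_eq, EuclideanSpace.norm_eq]
  congr 1
  rw [Fin.sum_univ_two, Fin.sum_univ_two]
  simp only [perp, Real.norm_eq_abs, Matrix.cons_val_zero, Matrix.cons_val_one, Matrix.head_cons,
    abs_neg]
  ring

lemma perp_smul (c : ℝ) (w : R2) : perp (c • w) = c • perp w := by
  rw [← perpL_apply, ← perpL_apply]; exact perpL.map_smul c w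

lemma perp_single0 : perp (EuclideanSpace.single (0 : Fin 2) (1:ℝ)) = EuclideanSpace.single 1 1 := by
  ext i
  fin_cases i <;> simp [perp, EuclideanSpace.single_apply]

lemma perp_single1 :
    perp (EuclideanSpace.single (1 : Fin 2) (1:ℝ)) = -EuclideanSpace.single 0 1 := by
  ext i
  fin_cases i <;> simp [perp, EuclideanSpace.single_apply, PiLp.neg_apply]

lemma euclid_decomp (w : R2) :
    w = w 0 • (EuclideanSpace.single 0 1 : R2) + w 1 • (EuclideanSpace.single 1 1 : R2) := by
  ext i
  fin_cases i <;>
    simp [PiLp.add_apply, PiLp.smul_apply, EuclideanSpace.single_apply]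

lemma perp_decomp (w : R2) :
    perp w = (-(w 1)) • (EuclideanSpace.single 0 1 : R2)
      + w 0 • (EuclideanSpace.single 1 1 : R2) := by
  ext i
  fin_cases i <;>
    simp [perp, PiLp.add_apply, PiLp.smul_apply, EuclideanSpace.single_apply]

lemma integral_fderiv_apply_eq_zero (g : R2 → ℝ) (hg : ContDiff ℝ 1 g)
    (hs : HasCompactSupport g) (w : R2) : ∫ x : R2, fderiv ℝ g x w = 0 := by
  obtain ⟨M, hM⟩ := hs.isBounded.subset_closedBall 0
  obtain ⟨C, hCb⟩ := (hs.fderiv (𝕜 := ℝ)).exists_bound_of_continuous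
    (hg.continuous_fderiv one_ne_zero)
  set F : ℝ → R2 → ℝ := fun a x => g (x + a • w) with hF
  set F' : ℝ → R2 → ℝ := fun a x => fderiv ℝ g (x + a • w) w with hF'
  have hdiff : ∀ (x : R2) (a : ℝ), HasDerivAt (fun a => F a x) (F' a x) a := by
    intro x a
    have h1 : HasDerivAt (fun a : ℝ => x + a • w) w a := by
      simpa using ((hasDerivAt_id a).smul_const w).const_add x
    exact (hg.differentiable one_ne_zero _).hasFDerivAt.comp_hasDerivAt a h1
  have key := hasDerivAt_integral_of_dominated_loc_of_deriv_le (F := F) (F' := F') (x₀ := 0)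
      (μ := volume)
      (bound := (Metric.closedBall (0:R2) (M + ‖w‖)).indicator (fun _ => C * ‖w‖))
      (Metric.ball_mem_nhds 0 one_pos)
      (Filter.Eventually.of_forall fun a =>
        (hg.continuous.comp (continuous_id.add continuous_const)).aestronglyMeasurable)
      (by
        have : Integrable g := hg.continuous.integrable_of_hasCompactSupport hs
        simpa [hF] using this)
      (by
        exact ((((hg.continuous_fderiv one_ne_zero).comp
          (continuous_id.add continuous_const)).clm_apply continuous_const)).aestronglyMeasurable)
      (by
        refine Filter.Eventually.of_forall fun x => fun a ha => ?_
        by_cases hx : x ∈ Metric.closedBall (0:R2) (M + ‖w‖)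
        · rw [Set.indicator_of_mem hx]
          calc ‖F' a x‖ ≤ ‖fderiv ℝ g (x + a • w)‖ * ‖w‖ :=
                (fderiv ℝ g (x + a • w)).le_opNorm w
            _ ≤ C * ‖w‖ := by
                exact mul_le_mul_of_nonneg_right (hCb _) (norm_nonneg _)
        · rw [Set.indicator_of_notMem hx]
          have hxn : M + ‖w‖ < ‖x‖ := by
            simpa [Metric.mem_closedBall] using hx
          have habs : |a| < 1 := by simpa [Real.dist_eq] using ha
          have hnot : x + a • w ∉ tsupport g := by
            intro hmem
            have h1 : ‖x + a • w‖ ≤ M := by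
              simpa [Metric.mem_closedBall] using hM hmem
            have h2 : ‖x‖ ≤ ‖x + a • w‖ + ‖a • w‖ := by
              calc ‖x‖ = ‖(x + a • w) - a • w‖ := by
                    congr 1
                    abel
              _ ≤ ‖x + a • w‖ + ‖a • w‖ := norm_sub_le _ _
            have h3 : ‖a • w‖ ≤ ‖w‖ := by
              rw [norm_smul]
              calc |a| * ‖w‖ ≤ 1 * ‖w‖ :=
                mul_le_mul_of_nonneg_right habs.le (norm_nonneg _)
              _ = ‖w‖ := one_mul _
            linarith
          have : fderiv ℝ g (x + a • w) = 0 := by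
            have hsub := support_fderiv_subset ℝ (f := g)
            by_contra h0
            exact hnot (hsub (Function.mem_support.2 h0))
          simp [hF', this]
          )
      (by
        refine (integrable_indicator_iff measurableSet_closedBall).2 ?_
        exact integrableOn_const measure_closedBall_lt_top.ne)
      (Filter.Eventually.of_forall fun x => fun a _ => hdiff x a)
  have h2 := key.2
  have h3 : (fun a => ∫ x, F a x) = fun _ : ℝ => ∫ x : R2, g x := by
    funext a
    simpa [hF] using integral_add_right_eq_self g (a • w)
  rw [h3] at h2
  have h4 := (hasDerivAt_const (0:ℝ) (∫ x : R2, g x)).unique h2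
  have h5 : ∫ x, F' 0 x = 0 := h4.symm
  simpa [hF'] using h5

lemma change_of_var (ε R : ℝ) (f1 : R2 × R2 → ℝ) (hf1 : Continuous f1)
    (hsupp1 : ∀ x v, R ≤ ‖x‖ + ‖v‖ → f1 (x, v) = 0)
    (χ : R2 → ℝ) (hχ : Continuous χ) :
    ∫ x, (∫ v, f1 (x - ε • perp v, v)) * χ x
      = ∫ p : R2 × R2, f1 p * χ (p.1 + ε • perp p.2) := by
  set H : R2 × R2 → ℝ := fun p => f1 (p.1 - ε • perp p.2, p.2) * χ p.1 with hHdef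
  set G : R2 × R2 → ℝ := fun p => f1 p * χ (p.1 + ε • perp p.2) with hGdef
  have hHc : Continuous H := by
    apply Continuous.mul ?_ (hχ.comp continuous_fst)
    exact hf1.comp ((continuous_fst.sub
      ((continuous_perp.comp continuous_snd).const_smul ε)).prodMk continuous_snd)
  have hGc : Continuous G := by
    apply hf1.mul (hχ.comp ?_)
    exact continuous_fst.add ((continuous_perp.comp continuous_snd).const_smul ε)
  have hHs : HasCompactSupport H := by
    apply HasCompactSupport.intro
      ((isCompact_closedBall (0:R2) (R + |ε| * R)).prod (isCompact_closedBall (0:R2) R))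
    rintro ⟨x, v⟩ hp
    simp only [Set.mem_prod, Metric.mem_closedBall, dist_zero_right, not_and_or, not_le] at hp
    have : f1 (x - ε • perp v, v) = 0 := by
      rcases hp with hx | hv
      · by_cases hv' : ‖v‖ ≤ R
        · apply hsupp1
          have h1 : ‖x‖ ≤ ‖x - ε • perp v‖ + ‖ε • perp v‖ := by
            calc ‖x‖ = ‖(x - ε • perp v) + ε • perp v‖ := by congr 1; abel
            _ ≤ _ := norm_add_le _ _
          have h2 : ‖ε • perp v‖ ≤ |ε| * R := by
            rw [norm_smul, Real.norm_eq_abs, norm_perp]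
            exact mul_le_mul_of_nonneg_left hv' (abs_nonneg ε)
          nlinarith [norm_nonneg v]
        · exact hsupp1 _ _ (by push_neg at hv'; nlinarith [norm_nonneg (x - ε • perp v)])
      · exact hsupp1 _ _ (by nlinarith [norm_nonneg (x - ε • perp v)])
    simp [hHdef, this]
  have hGs : HasCompactSupport G := by
    apply HasCompactSupport.intro
      ((isCompact_closedBall (0:R2) R).prod (isCompact_closedBall (0:R2) R))
    rintro ⟨x, v⟩ hp
    simp only [Set.mem_prod, Metric.mem_closedBall, dist_zero_right, not_and_or, not_le] at hp
    have : f1 (x, v) = 0 := by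
      rcases hp with hx | hv
      · exact hsupp1 _ _ (by nlinarith [norm_nonneg v])
      · exact hsupp1 _ _ (by nlinarith [norm_nonneg x])
    simp [hGdef, this]
  have hHi : Integrable H := hHc.integrable_of_hasCompactSupport hHs
  have hGi : Integrable G := hGc.integrable_of_hasCompactSupport hGs
  have step1 : ∫ x, (∫ v, f1 (x - ε • perp v, v)) * χ x = ∫ x, ∫ v, H (x, v) := by
    congr 1; funext x
    exact (integral_mul_const _ _).symm
  rw [step1]
  have hHi' : Integrable H (volume.prod volume) := by rwa [← Measure.volume_eq_prod R2 R2]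
  have hGi' : Integrable G (volume.prod volume) := by rwa [← Measure.volume_eq_prod R2 R2]
  calc ∫ x, ∫ v, H (x, v) = ∫ p, H p ∂(volume.prod volume) := (integral_prod _ hHi').symm
    _ = ∫ v, ∫ x, H (x, v) := integral_prod_symm _ hHi'
    _ = ∫ v, ∫ x, G (x, v) := by
        congr 1; funext v
        have := integral_add_right_eq_self (μ := (volume : Measure R2))
          (fun x => H (x, v)) (ε • perp v)
        rw [← this]
        congr 1; funext x
        simp only [hHdef, hGdef, add_sub_cancel_right]
    _ = ∫ p, G p ∂(volume.prod volume) := (integral_prod_symm _ hGi').symm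
    _ = ∫ p : R2 × R2, G p := by rw [← Measure.volume_eq_prod R2 R2]
/-- Weak formulation of the transport of the gyro-macroscopic density
`ρ̄(t,x) = ∫ f(t, x − εv^⊥, v) dv`: for a `C¹`, compactly supported, nonnegative solution
of the Vlasov equation with continuous, `C¹`-in-`x`, curl-free field `E`, and any smooth
compactly supported test function `Φ`, for `t ∈ (0,T)`,
`d/dt ∫ ρ̄ Φ dx = ∫ ρ̄ ∂_tΦ dx + ∫∫ f(t,x,v) ∇_xΦ(t, x + εv^⊥)·(E(t,x))^⊥ dx dv`. -/
theorem gyro_weak_formulation (ε T : ℝ) (hε : 0 < ε) (hT : 0 < T)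
    (E : ℝ × R2 → R2) (hEc : Continuous E)
    (hEx : ∀ t, ContDiff ℝ 1 fun x => E (t, x))
    (hcurl : ∀ t x, fderiv ℝ (fun y => E (t, y)) x (EuclideanSpace.single 1 1) 0
      = fderiv ℝ (fun y => E (t, y)) x (EuclideanSpace.single 0 1) 1)
    (f : ℝ × R2 × R2 → ℝ) (hf : ContDiff ℝ 1 f) (hpos : ∀ z, 0 ≤ f z)
    (R : ℝ) (hR : 0 < R)
    (hsupp : ∀ t ∈ Set.Icc (0 : ℝ) T, ∀ x v, R ≤ ‖x‖ + ‖v‖ → f (t, x, v) = 0)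
    (hPDE : ∀ t ∈ Set.Icc (0 : ℝ) T, ∀ x v, fderiv ℝ f (t, x, v)
      (1, ε⁻¹ • v, ε⁻¹ • E (t, x) + (ε ^ 2)⁻¹ • perp v) = 0)
    (Φ : ℝ × R2 → ℝ) (hΦ : ContDiff ℝ (⊤ : ℕ∞) Φ) (hΦs : HasCompactSupport Φ) :
    ∀ t ∈ Set.Ioo (0 : ℝ) T,
      HasDerivAt (fun s => ∫ x, (∫ v, f (s, x - ε • perp v, v)) * Φ (s, x))
        ((∫ x, (∫ v, f (t, x - ε • perp v, v)) * deriv (fun s => Φ (s, x)) t)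
          + ∫ x, ∫ v, f (t, x, v)
              * fderiv ℝ (fun z => Φ (t, z)) (x + ε • perp v) (perp (E (t, x)))) t := by
  intro t ht
  have hε' : (ε : ℝ) ≠ 0 := ne_of_gt hε
  have htI : t ∈ Set.Icc (0 : ℝ) T := ⟨ht.1.le, ht.2.le⟩
  -- basic continuity facts
  have hfC : Continuous f := hf.continuous
  have hfdC : Continuous (fderiv ℝ f) := hf.continuous_fderiv one_ne_zero
  have hΦ1 : ContDiff ℝ 1 Φ := hΦ.of_le (by simp)
  have hΦC : Continuous Φ := hΦ.continuous
  have hΦdC : Continuous (fderiv ℝ Φ) := hΦ1.continuous_fderiv one_ne_zero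
  have hPtC : Continuous (fun p : R2 × R2 => p.1 + ε • perp p.2) :=
    continuous_fst.add ((continuous_perp.comp continuous_snd).const_smul ε)
  -- vanishing of fderiv f outside the support region
  have hfd0 : ∀ s ∈ Set.Ioo (0:ℝ) T, ∀ x v : R2, R < ‖x‖ + ‖v‖ →
      fderiv ℝ f (s, x, v) = 0 := by
    intro s hs x v hxv
    have hopen : IsOpen {z : ℝ × R2 × R2 | z.1 ∈ Set.Ioo (0:ℝ) T ∧ R < ‖z.2.1‖ + ‖z.2.2‖} := by
      apply IsOpen.inter
      · exact isOpen_Ioo.preimage continuous_fst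
      · exact isOpen_lt continuous_const
          (((continuous_fst.comp continuous_snd).norm).add
            ((continuous_snd.comp continuous_snd).norm))
    have hev : f =ᶠ[nhds (s, x, v)] (fun _ => (0:ℝ)) := by
      refine Filter.eventuallyEq_of_mem (hopen.mem_nhds ⟨hs, hxv⟩) ?_
      intro z hz
      exact hsupp z.1 ⟨hz.1.1.le, hz.1.2.le⟩ z.2.1 z.2.2 hz.2.le
    rw [hev.fderiv_eq]
    exact fderiv_const_apply 0
  -- partial derivative lemmas
  -- time derivative of f
  have hft : ∀ (s : ℝ) (x v : R2),
      HasDerivAt (fun s' => f (s', x, v)) (fderiv ℝ f (s, x, v) (1, 0, 0)) s := by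
    intro s x v
    have hc : HasDerivAt (fun s' : ℝ => ((s', x, v) : ℝ × R2 × R2)) (1, 0, 0) s :=
      (hasDerivAt_id s).prodMk ((hasDerivAt_const s x).prodMk (hasDerivAt_const s v))
    exact (hf.differentiable one_ne_zero _).hasFDerivAt.comp_hasDerivAt s hc
  -- time derivative of Φ
  have hΦt : ∀ (s : ℝ) (y : R2),
      HasDerivAt (fun s' => Φ (s', y)) (fderiv ℝ Φ (s, y) (1, 0)) s := by
    intro s y
    have hc : HasDerivAt (fun s' : ℝ => ((s', y) : ℝ × R2)) (1, 0) s :=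
      (hasDerivAt_id s).prodMk (hasDerivAt_const s y)
    exact (hΦ1.differentiable one_ne_zero _).hasFDerivAt.comp_hasDerivAt s hc
  -- spatial partial fderiv of Φ
  have hΦpart : ∀ (s : ℝ) (y w : R2),
      fderiv ℝ (fun z => Φ (s, z)) y w = fderiv ℝ Φ (s, y) (0, w) := by
    intro s y w
    have hc : HasFDerivAt (fun z : R2 => ((s, z) : ℝ × R2))
        ((0 : R2 →L[ℝ] ℝ).prod (ContinuousLinearMap.id ℝ R2)) y :=
      (hasFDerivAt_const s y).prodMk (hasFDerivAt_id y)
    have h := ((hΦ1.differentiable one_ne_zero _).hasFDerivAt.comp y hc).fderiv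
    have heq : (fun z => Φ (s, z)) = Φ ∘ (fun z : R2 => (s, z)) := rfl
    rw [heq, h]
    rfl
  -- x-section fderiv of the product
  have hsecx : ∀ (s : ℝ) (x v w : R2),
      fderiv ℝ (fun x' => f (s, x', v) * Φ (s, x' + ε • perp v)) x w
        = fderiv ℝ f (s, x, v) (0, w, 0) * Φ (s, x + ε • perp v)
          + f (s, x, v) * fderiv ℝ Φ (s, x + ε • perp v) (0, w) := by
    intro s x v w
    have h1 : HasFDerivAt (fun x' : R2 => ((s, x', v) : ℝ × R2 × R2))
        ((0 : R2 →L[ℝ] ℝ).prod ((ContinuousLinearMap.id ℝ R2).prod 0)) x :=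
      (hasFDerivAt_const s x).prodMk ((hasFDerivAt_id x).prodMk (hasFDerivAt_const v x))
    have hf1 : HasFDerivAt (fun x' : R2 => f (s, x', v))
        ((fderiv ℝ f (s, x, v)).comp ((0 : R2 →L[ℝ] ℝ).prod
          ((ContinuousLinearMap.id ℝ R2).prod 0))) x :=
      (hf.differentiable one_ne_zero _).hasFDerivAt.comp x h1
    have h2 : HasFDerivAt (fun x' : R2 => ((s, x' + ε • perp v) : ℝ × R2))
        ((0 : R2 →L[ℝ] ℝ).prod (ContinuousLinearMap.id ℝ R2)) x :=
      (hasFDerivAt_const s x).prodMk ((hasFDerivAt_id x).add_const (ε • perp v))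
    have hΦ2 : HasFDerivAt (fun x' : R2 => Φ (s, x' + ε • perp v))
        ((fderiv ℝ Φ (s, x + ε • perp v)).comp
          ((0 : R2 →L[ℝ] ℝ).prod (ContinuousLinearMap.id ℝ R2))) x :=
      (hΦ1.differentiable one_ne_zero _).hasFDerivAt.comp x h2
    rw [(hf1.fun_mul hΦ2).fderiv]
    simp [ContinuousLinearMap.add_apply, ContinuousLinearMap.smul_apply,
      ContinuousLinearMap.comp_apply, ContinuousLinearMap.prod_apply, smul_eq_mul]
    ring
  -- v-section fderiv of the product
  have hsecv : ∀ (s : ℝ) (x v w : R2),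
      fderiv ℝ (fun v' => f (s, x, v') * Φ (s, x + ε • perp v')) v w
        = fderiv ℝ f (s, x, v) (0, 0, w) * Φ (s, x + ε • perp v)
          + f (s, x, v) * fderiv ℝ Φ (s, x + ε • perp v) (0, ε • perp w) := by
    intro s x v w
    have h1 : HasFDerivAt (fun v' : R2 => ((s, x, v') : ℝ × R2 × R2))
        ((0 : R2 →L[ℝ] ℝ).prod ((0 : R2 →L[ℝ] R2).prod (ContinuousLinearMap.id ℝ R2))) v :=
      (hasFDerivAt_const s v).prodMk ((hasFDerivAt_const x v).prodMk (hasFDerivAt_id v))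
    have hf1 : HasFDerivAt (fun v' : R2 => f (s, x, v'))
        ((fderiv ℝ f (s, x, v)).comp ((0 : R2 →L[ℝ] ℝ).prod
          ((0 : R2 →L[ℝ] R2).prod (ContinuousLinearMap.id ℝ R2)))) v :=
      (hf.differentiable one_ne_zero _).hasFDerivAt.comp v h1
    have hinner : HasFDerivAt (fun v' : R2 => x + ε • perp v') (ε • perpL) v := by
      exact (perpL.hasFDerivAt.const_smul ε).const_add x
    have h2 : HasFDerivAt (fun v' : R2 => ((s, x + ε • perp v') : ℝ × R2))
        ((0 : R2 →L[ℝ] ℝ).prod (ε • perpL)) v :=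
      (hasFDerivAt_const s v).prodMk hinner
    have hΦ2 : HasFDerivAt (fun v' : R2 => Φ (s, x + ε • perp v'))
        ((fderiv ℝ Φ (s, x + ε • perp v)).comp
          ((0 : R2 →L[ℝ] ℝ).prod (ε • perpL))) v :=
      (hΦ1.differentiable one_ne_zero _).hasFDerivAt.comp v h2
    rw [(hf1.fun_mul hΦ2).fderiv]
    simp [ContinuousLinearMap.add_apply, ContinuousLinearMap.smul_apply,
      ContinuousLinearMap.comp_apply, ContinuousLinearMap.prod_apply, smul_eq_mul, perpL_apply]
    ring
  -- ContDiff of the sections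
  have hperpC : ContDiff ℝ 1 perp := perpL.contDiff
  have hsecxC : ∀ (s : ℝ) (v : R2),
      ContDiff ℝ 1 (fun x : R2 => f (s, x, v) * Φ (s, x + ε • perp v)) := by
    intro s v
    exact (hf.comp (contDiff_const.prodMk (contDiff_id.prodMk contDiff_const))).mul
      (hΦ1.comp (contDiff_const.prodMk (contDiff_id.add contDiff_const)))
  have hsecvC : ∀ (s : ℝ) (x : R2),
      ContDiff ℝ 1 (fun v : R2 => f (s, x, v) * Φ (s, x + ε • perp v)) := by
    intro s x
    exact (hf.comp (contDiff_const.prodMk (contDiff_const.prodMk contDiff_id))).mul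
      (hΦ1.comp (contDiff_const.prodMk (contDiff_const.add (hperpC.const_smul ε))))
  -- compact support of the sections
  have hsecxS : ∀ (v : R2),
      HasCompactSupport (fun x : R2 => f (t, x, v) * Φ (t, x + ε • perp v)) := by
    intro v
    apply HasCompactSupport.intro (isCompact_closedBall (0 : R2) R)
    intro x hx
    simp only [Metric.mem_closedBall, dist_zero_right, not_le] at hx
    have : f (t, x, v) = 0 := hsupp t htI x v (by nlinarith [norm_nonneg v])
    simp [this]
  have hsecvS : ∀ (x : R2),
      HasCompactSupport (fun v : R2 => f (t, x, v) * Φ (t, x + ε • perp v)) := by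
    intro x
    apply HasCompactSupport.intro (isCompact_closedBall (0 : R2) R)
    intro v hv
    simp only [Metric.mem_closedBall, dist_zero_right, not_le] at hv
    have : f (t, x, v) = 0 := hsupp t htI x v (by nlinarith [norm_nonneg x])
    simp [this]
  -- coordinate multiplication lemmas
  have hD0pt : ∀ (x v : R2),
      fderiv ℝ (fun v' => (-(v' 1)) * (f (t, x, v') * Φ (t, x + ε • perp v'))) v
          (EuclideanSpace.single 0 1)
        = (-(v 1)) * (fderiv ℝ f (t, x, v) (0, 0, EuclideanSpace.single 0 1)
            * Φ (t, x + ε • perp v)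
          + f (t, x, v) * fderiv ℝ Φ (t, x + ε • perp v)
              (0, ε • perp (EuclideanSpace.single 0 1))) := by
    intro x v
    have hc : HasFDerivAt (fun v' : R2 => -(v' 1))
        (-(EuclideanSpace.proj (1 : Fin 2) : R2 →L[ℝ] ℝ)) v :=
      (EuclideanSpace.proj (1 : Fin 2) : R2 →L[ℝ] ℝ).hasFDerivAt.neg
    have hm : HasFDerivAt (fun v' : R2 => f (t, x, v') * Φ (t, x + ε • perp v'))
        (fderiv ℝ (fun v' : R2 => f (t, x, v') * Φ (t, x + ε • perp v')) v) v :=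
      (((hsecvC t x).differentiable one_ne_zero) v).hasFDerivAt
    rw [(hc.fun_mul hm).fderiv]
    simp only [ContinuousLinearMap.add_apply, ContinuousLinearMap.smul_apply,
      ContinuousLinearMap.neg_apply, smul_eq_mul]
    rw [hsecv t x v (EuclideanSpace.single 0 1)]
    have h01 : (EuclideanSpace.proj (1 : Fin 2) : R2 →L[ℝ] ℝ) (EuclideanSpace.single 0 1) = 0 := by
      simp [EuclideanSpace.single_apply]
    rw [h01]
    ring
  have hD1pt : ∀ (x v : R2),
      fderiv ℝ (fun v' => (v' 0) * (f (t, x, v') * Φ (t, x + ε • perp v'))) v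
          (EuclideanSpace.single 1 1)
        = (v 0) * (fderiv ℝ f (t, x, v) (0, 0, EuclideanSpace.single 1 1)
            * Φ (t, x + ε • perp v)
          + f (t, x, v) * fderiv ℝ Φ (t, x + ε • perp v)
              (0, ε • perp (EuclideanSpace.single 1 1))) := by
    intro x v
    have hc : HasFDerivAt (fun v' : R2 => (v' 0))
        ((EuclideanSpace.proj (0 : Fin 2) : R2 →L[ℝ] ℝ)) v :=
      (EuclideanSpace.proj (0 : Fin 2) : R2 →L[ℝ] ℝ).hasFDerivAt
    have hm : HasFDerivAt (fun v' : R2 => f (t, x, v') * Φ (t, x + ε • perp v'))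
        (fderiv ℝ (fun v' : R2 => f (t, x, v') * Φ (t, x + ε • perp v')) v) v :=
      (((hsecvC t x).differentiable one_ne_zero) v).hasFDerivAt
    rw [(hc.fun_mul hm).fderiv]
    simp only [ContinuousLinearMap.add_apply, ContinuousLinearMap.smul_apply, smul_eq_mul]
    rw [hsecv t x v (EuclideanSpace.single 1 1)]
    have h10 : (EuclideanSpace.proj (0 : Fin 2) : R2 →L[ℝ] ℝ) (EuclideanSpace.single 1 1) = 0 := by
      simp [EuclideanSpace.single_apply]
    rw [h10]
    ring
  -- the master pointwise identity
  have hee : ε * (ε ^ 2)⁻¹ = ε⁻¹ := by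
    field_simp
  have hmaster : ∀ (x v : R2),
      fderiv ℝ f (t, x, v) (1, 0, 0) * Φ (t, x + ε • perp v)
        = (f (t, x, v) * fderiv ℝ Φ (t, x + ε • perp v) (0, perp (E (t, x))))
          - (fderiv ℝ f (t, x, v) (0, ε⁻¹ • v, 0) * Φ (t, x + ε • perp v)
              + f (t, x, v) * fderiv ℝ Φ (t, x + ε • perp v) (0, ε⁻¹ • v))
          - (fderiv ℝ f (t, x, v) (0, 0, ε⁻¹ • E (t, x)) * Φ (t, x + ε • perp v)
              + f (t, x, v) * fderiv ℝ Φ (t, x + ε • perp v) (0, perp (E (t, x))))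
          - (ε ^ 2)⁻¹ * ((-(v 1)) * (fderiv ℝ f (t, x, v) (0, 0, EuclideanSpace.single 0 1)
                * Φ (t, x + ε • perp v)
              + f (t, x, v) * fderiv ℝ Φ (t, x + ε • perp v)
                  (0, ε • perp (EuclideanSpace.single 0 1)))
            + (v 0) * (fderiv ℝ f (t, x, v) (0, 0, EuclideanSpace.single 1 1)
                * Φ (t, x + ε • perp v)
              + f (t, x, v) * fderiv ℝ Φ (t, x + ε • perp v)
                  (0, ε • perp (EuclideanSpace.single 1 1)))) := by
    intro x v
    have hPDEexp : fderiv ℝ f (t, x, v) (1, 0, 0)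
        + fderiv ℝ f (t, x, v) (0, ε⁻¹ • v, 0)
        + fderiv ℝ f (t, x, v) (0, 0, ε⁻¹ • E (t, x))
        + (ε ^ 2)⁻¹ * ((-(v 1)) * fderiv ℝ f (t, x, v) (0, 0, EuclideanSpace.single 0 1)
            + (v 0) * fderiv ℝ f (t, x, v) (0, 0, EuclideanSpace.single 1 1)) = 0 := by
      have h0 := hPDE t htI x v
      have hdec : ((1:ℝ), ε⁻¹ • v, ε⁻¹ • E (t, x) + (ε ^ 2)⁻¹ • perp v)
          = (((1:ℝ), (0:R2), (0:R2)) + ((0:ℝ), ε⁻¹ • v, (0:R2)) + ((0:ℝ), (0:R2), ε⁻¹ • E (t, x)))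
            + (ε ^ 2)⁻¹ • ((-(v 1)) • ((0:ℝ), (0:R2), (EuclideanSpace.single 0 1 : R2))
              + (v 0) • ((0:ℝ), (0:R2), (EuclideanSpace.single 1 1 : R2))) := by
        have h3 : perp v = (-(v 1)) • (EuclideanSpace.single 0 1 : R2)
            + (v 0) • (EuclideanSpace.single 1 1 : R2) := perp_decomp v
        simp only [Prod.mk_add_mk, Prod.smul_mk, smul_zero, add_zero, zero_add, smul_add]
        refine Prod.ext (by simp) (Prod.ext (by simp) ?_)
        simp only []
        rw [h3]
        simp [smul_add]
      rw [hdec] at h0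
      simp only [map_add, _root_.map_smul, smul_eq_mul] at h0
      linarith [h0]
    have hM1 : fderiv ℝ Φ (t, x + ε • perp v) (0, ε⁻¹ • v)
        = ε⁻¹ * ((v 0) * fderiv ℝ Φ (t, x + ε • perp v) (0, EuclideanSpace.single 0 1)
          + (v 1) * fderiv ℝ Φ (t, x + ε • perp v) (0, EuclideanSpace.single 1 1)) := by
      have hv : ((0:ℝ), ε⁻¹ • v)
          = ε⁻¹ • ((v 0) • ((0:ℝ), (EuclideanSpace.single 0 1 : R2))
            + (v 1) • ((0:ℝ), (EuclideanSpace.single 1 1 : R2))) := by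
        simp only [Prod.smul_mk, Prod.mk_add_mk, smul_zero, add_zero]
        refine Prod.ext (by simp) ?_
        simp only []
        congr 1
        exact euclid_decomp v
      rw [hv, _root_.map_smul, map_add, _root_.map_smul, _root_.map_smul]
      simp [smul_eq_mul, mul_add]
    have hM2 : fderiv ℝ Φ (t, x + ε • perp v) (0, ε • perp (EuclideanSpace.single 0 1))
        = ε * fderiv ℝ Φ (t, x + ε • perp v) (0, EuclideanSpace.single 1 1) := by
      rw [perp_single0]
      have h' : ((0:ℝ), ε • (EuclideanSpace.single 1 1 : R2))
          = ε • ((0:ℝ), (EuclideanSpace.single 1 1 : R2)) := by simp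
      rw [h', _root_.map_smul]; simp
    have hM3 : fderiv ℝ Φ (t, x + ε • perp v) (0, ε • perp (EuclideanSpace.single 1 1))
        = -(ε * fderiv ℝ Φ (t, x + ε • perp v) (0, EuclideanSpace.single 0 1)) := by
      rw [perp_single1]
      have h' : ((0:ℝ), ε • -(EuclideanSpace.single 0 1 : R2))
          = (-ε) • ((0:ℝ), (EuclideanSpace.single 0 1 : R2)) := by
        simp [smul_neg, neg_smul]
      rw [h', _root_.map_smul]; simp
    rw [hM1, hM2, hM3]
    linear_combination Φ (t, x + ε • perp v) * hPDEexp
      - f (t, x, v) * ((v 1) * fderiv ℝ Φ (t, x + ε • perp v) (0, EuclideanSpace.single 1 1)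
        + (v 0) * fderiv ℝ Φ (t, x + ε • perp v) (0, EuclideanSpace.single 0 1)) * hee
  -- continuity building blocks
  have hc0 : Continuous (fun p : R2 × R2 => ((t, p.1, p.2) : ℝ × R2 × R2)) :=
    continuous_const.prodMk (continuous_fst.prodMk continuous_snd)
  have hc1 : Continuous (fun p : R2 × R2 => fderiv ℝ f (t, p.1, p.2)) := hfdC.comp hc0
  have hc2 : Continuous (fun p : R2 × R2 => fderiv ℝ Φ (t, p.1 + ε • perp p.2)) :=
    hΦdC.comp (continuous_const.prodMk hPtC)
  have hc3 : Continuous (fun p : R2 × R2 => Φ (t, p.1 + ε • perp p.2)) :=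
    hΦC.comp (continuous_const.prodMk hPtC)
  have hc4 : Continuous (fun p : R2 × R2 => f (t, p.1, p.2)) := hfC.comp hc0
  have hc5 : Continuous (fun p : R2 × R2 => perp (E (t, p.1))) :=
    continuous_perp.comp (hEc.comp (continuous_const.prodMk continuous_fst))
  -- integrability helpers
  have hIntKey : ∀ ψ : R2 × R2 → ℝ, Continuous ψ →
      (∀ x v : R2, R < ‖x‖ + ‖v‖ → ψ (x, v) = 0) → Integrable ψ := by
    intro ψ hc h0
    apply hc.integrable_of_hasCompactSupport
    apply HasCompactSupport.intro
      ((isCompact_closedBall (0:R2) R).prod (isCompact_closedBall (0:R2) R))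
    rintro ⟨x, v⟩ hp
    simp only [Set.mem_prod, Metric.mem_closedBall, dist_zero_right, not_and_or, not_le] at hp
    rcases hp with h | h
    · exact h0 x v (by nlinarith [norm_nonneg v])
    · exact h0 x v (by nlinarith [norm_nonneg x])
  -- the various integrable functions
  have TaI : Integrable (fun p : R2 × R2 =>
      fderiv ℝ f (t, p.1, p.2) (1, 0, 0) * Φ (t, p.1 + ε • perp p.2)) := by
    refine hIntKey _ ((hc1.clm_apply continuous_const).mul hc3) (fun x v h => ?_)
    rw [hfd0 t ht x v h]; simp
  have TbI : Integrable (fun p : R2 × R2 =>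
      f (t, p.1, p.2) * fderiv ℝ Φ (t, p.1 + ε • perp p.2) (1, 0)) := by
    refine hIntKey _ (hc4.mul (hc2.clm_apply continuous_const)) (fun x v h => ?_)
    rw [hsupp t htI x v h.le]; simp
  have G2I : Integrable (fun p : R2 × R2 =>
      f (t, p.1, p.2) * fderiv ℝ Φ (t, p.1 + ε • perp p.2) (0, perp (E (t, p.1)))) := by
    refine hIntKey _ (hc4.mul (hc2.clm_apply (continuous_const.prodMk hc5))) (fun x v h => ?_)
    rw [hsupp t htI x v h.le]; simp
  have A1I : Integrable (fun p : R2 × R2 =>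
      fderiv ℝ f (t, p.1, p.2) (0, ε⁻¹ • p.2, 0) * Φ (t, p.1 + ε • perp p.2)
        + f (t, p.1, p.2) * fderiv ℝ Φ (t, p.1 + ε • perp p.2) (0, ε⁻¹ • p.2)) := by
    refine hIntKey _ (((hc1.clm_apply (continuous_const.prodMk
      ((continuous_snd.const_smul ε⁻¹).prodMk continuous_const))).mul hc3).add
      (hc4.mul (hc2.clm_apply (continuous_const.prodMk
        (continuous_snd.const_smul ε⁻¹))))) (fun x v h => ?_)
    rw [hfd0 t ht x v h, hsupp t htI x v h.le]; simp
  have A2I : Integrable (fun p : R2 × R2 =>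
      fderiv ℝ f (t, p.1, p.2) (0, 0, ε⁻¹ • E (t, p.1)) * Φ (t, p.1 + ε • perp p.2)
        + f (t, p.1, p.2) * fderiv ℝ Φ (t, p.1 + ε • perp p.2) (0, perp (E (t, p.1)))) := by
    refine hIntKey _ (((hc1.clm_apply (continuous_const.prodMk (continuous_const.prodMk
      ((hEc.comp (continuous_const.prodMk continuous_fst)).const_smul ε⁻¹)))).mul hc3).add
      (hc4.mul (hc2.clm_apply (continuous_const.prodMk hc5)))) (fun x v h => ?_)
    rw [hfd0 t ht x v h, hsupp t htI x v h.le]; simp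
  have WI : Integrable (fun p : R2 × R2 =>
      (-(p.2 1)) * (fderiv ℝ f (t, p.1, p.2) (0, 0, EuclideanSpace.single 0 1)
          * Φ (t, p.1 + ε • perp p.2)
        + f (t, p.1, p.2) * fderiv ℝ Φ (t, p.1 + ε • perp p.2)
            (0, ε • perp (EuclideanSpace.single 0 1)))
      + (p.2 0) * (fderiv ℝ f (t, p.1, p.2) (0, 0, EuclideanSpace.single 1 1)
          * Φ (t, p.1 + ε • perp p.2)
        + f (t, p.1, p.2) * fderiv ℝ Φ (t, p.1 + ε • perp p.2)
            (0, ε • perp (EuclideanSpace.single 1 1)))) := by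
    have hcoord1 : Continuous (fun p : R2 × R2 => -(p.2 1)) :=
      ((EuclideanSpace.proj (1 : Fin 2) : R2 →L[ℝ] ℝ).continuous.comp continuous_snd).neg
    have hcoord0 : Continuous (fun p : R2 × R2 => p.2 0) :=
      (EuclideanSpace.proj (0 : Fin 2) : R2 →L[ℝ] ℝ).continuous.comp continuous_snd
    refine hIntKey _ ((hcoord1.mul (((hc1.clm_apply continuous_const).mul hc3).add
      (hc4.mul (hc2.clm_apply continuous_const)))).add
      (hcoord0.mul (((hc1.clm_apply continuous_const).mul hc3).add
      (hc4.mul (hc2.clm_apply continuous_const))))) (fun x v h => ?_)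
    rw [hfd0 t ht x v h, hsupp t htI x v h.le]; simp
  have hIntV : ∀ (x : R2) (ψ : R2 → ℝ), Continuous ψ →
      (∀ v : R2, R < ‖x‖ + ‖v‖ → ψ v = 0) → Integrable ψ := by
    intro x ψ hc h0
    apply hc.integrable_of_hasCompactSupport
    apply HasCompactSupport.intro (isCompact_closedBall (0:R2) R)
    intro v hv
    simp only [Metric.mem_closedBall, dist_zero_right, not_le] at hv
    exact h0 v (by nlinarith [norm_nonneg x])
  -- the three zero integrals
  have hA1zero : (∫ p : R2 × R2,
      (fderiv ℝ f (t, p.1, p.2) (0, ε⁻¹ • p.2, 0) * Φ (t, p.1 + ε • perp p.2)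
        + f (t, p.1, p.2) * fderiv ℝ Φ (t, p.1 + ε • perp p.2) (0, ε⁻¹ • p.2))) = 0 := by
    have h' : Integrable (fun p : R2 × R2 =>
        fderiv ℝ f (t, p.1, p.2) (0, ε⁻¹ • p.2, 0) * Φ (t, p.1 + ε • perp p.2)
          + f (t, p.1, p.2) * fderiv ℝ Φ (t, p.1 + ε • perp p.2) (0, ε⁻¹ • p.2))
        (volume.prod volume) := by
      rw [← Measure.volume_eq_prod R2 R2]; exact A1I
    rw [Measure.volume_eq_prod R2 R2, integral_prod_symm _ h']
    have inner : ∀ v : R2, (∫ x : R2,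
        (fderiv ℝ f (t, x, v) (0, ε⁻¹ • v, 0) * Φ (t, x + ε • perp v)
          + f (t, x, v) * fderiv ℝ Φ (t, x + ε • perp v) (0, ε⁻¹ • v))) = 0 := by
      intro v
      calc (∫ x : R2, (fderiv ℝ f (t, x, v) (0, ε⁻¹ • v, 0) * Φ (t, x + ε • perp v)
              + f (t, x, v) * fderiv ℝ Φ (t, x + ε • perp v) (0, ε⁻¹ • v)))
          = ∫ x : R2, fderiv ℝ (fun x' => f (t, x', v) * Φ (t, x' + ε • perp v)) x (ε⁻¹ • v) := by
            congr 1; funext x; exact (hsecx t x v (ε⁻¹ • v)).symm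
        _ = 0 := integral_fderiv_apply_eq_zero _ (hsecxC t v) (hsecxS v) _
    simp only [inner, integral_zero]
  have hA2zero : (∫ p : R2 × R2,
      (fderiv ℝ f (t, p.1, p.2) (0, 0, ε⁻¹ • E (t, p.1)) * Φ (t, p.1 + ε • perp p.2)
        + f (t, p.1, p.2) * fderiv ℝ Φ (t, p.1 + ε • perp p.2) (0, perp (E (t, p.1))))) = 0 := by
    have h' : Integrable (fun p : R2 × R2 =>
        fderiv ℝ f (t, p.1, p.2) (0, 0, ε⁻¹ • E (t, p.1)) * Φ (t, p.1 + ε • perp p.2)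
          + f (t, p.1, p.2) * fderiv ℝ Φ (t, p.1 + ε • perp p.2) (0, perp (E (t, p.1))))
        (volume.prod volume) := by
      rw [← Measure.volume_eq_prod R2 R2]; exact A2I
    rw [Measure.volume_eq_prod R2 R2, integral_prod _ h']
    have inner : ∀ x : R2, (∫ v : R2,
        (fderiv ℝ f (t, x, v) (0, 0, ε⁻¹ • E (t, x)) * Φ (t, x + ε • perp v)
          + f (t, x, v) * fderiv ℝ Φ (t, x + ε • perp v) (0, perp (E (t, x))))) = 0 := by
      intro x
      have harg : ε • perp (ε⁻¹ • E (t, x)) = perp (E (t, x)) := by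
        rw [perp_smul, smul_smul, mul_inv_cancel₀ hε', one_smul]
      calc (∫ v : R2, (fderiv ℝ f (t, x, v) (0, 0, ε⁻¹ • E (t, x)) * Φ (t, x + ε • perp v)
              + f (t, x, v) * fderiv ℝ Φ (t, x + ε • perp v) (0, perp (E (t, x)))))
          = ∫ v : R2, fderiv ℝ (fun v' => f (t, x, v') * Φ (t, x + ε • perp v')) v
              (ε⁻¹ • E (t, x)) := by
            congr 1; funext v
            rw [hsecv t x v (ε⁻¹ • E (t, x)), harg]
        _ = 0 := integral_fderiv_apply_eq_zero _ (hsecvC t x) (hsecvS x) _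
    simp only [inner, integral_zero]
  have hWzero : (∫ p : R2 × R2,
      ((-(p.2 1)) * (fderiv ℝ f (t, p.1, p.2) (0, 0, EuclideanSpace.single 0 1)
          * Φ (t, p.1 + ε • perp p.2)
        + f (t, p.1, p.2) * fderiv ℝ Φ (t, p.1 + ε • perp p.2)
            (0, ε • perp (EuclideanSpace.single 0 1)))
      + (p.2 0) * (fderiv ℝ f (t, p.1, p.2) (0, 0, EuclideanSpace.single 1 1)
          * Φ (t, p.1 + ε • perp p.2)
        + f (t, p.1, p.2) * fderiv ℝ Φ (t, p.1 + ε • perp p.2)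
            (0, ε • perp (EuclideanSpace.single 1 1))))) = 0 := by
    have h' : Integrable (fun p : R2 × R2 =>
        (-(p.2 1)) * (fderiv ℝ f (t, p.1, p.2) (0, 0, EuclideanSpace.single 0 1)
            * Φ (t, p.1 + ε • perp p.2)
          + f (t, p.1, p.2) * fderiv ℝ Φ (t, p.1 + ε • perp p.2)
              (0, ε • perp (EuclideanSpace.single 0 1)))
        + (p.2 0) * (fderiv ℝ f (t, p.1, p.2) (0, 0, EuclideanSpace.single 1 1)
            * Φ (t, p.1 + ε • perp p.2)
          + f (t, p.1, p.2) * fderiv ℝ Φ (t, p.1 + ε • perp p.2)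
              (0, ε • perp (EuclideanSpace.single 1 1))))
        (volume.prod volume) := by
      rw [← Measure.volume_eq_prod R2 R2]; exact WI
    rw [Measure.volume_eq_prod R2 R2, integral_prod _ h']
    have inner : ∀ x : R2, (∫ v : R2,
        ((-(v 1)) * (fderiv ℝ f (t, x, v) (0, 0, EuclideanSpace.single 0 1)
            * Φ (t, x + ε • perp v)
          + f (t, x, v) * fderiv ℝ Φ (t, x + ε • perp v)
              (0, ε • perp (EuclideanSpace.single 0 1)))
        + (v 0) * (fderiv ℝ f (t, x, v) (0, 0, EuclideanSpace.single 1 1)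
            * Φ (t, x + ε • perp v)
          + f (t, x, v) * fderiv ℝ Φ (t, x + ε • perp v)
              (0, ε • perp (EuclideanSpace.single 1 1))))) = 0 := by
      intro x
      -- continuity pieces in v
      have hcv1 : Continuous (fun v : R2 => fderiv ℝ f (t, x, v)) :=
        hfdC.comp (continuous_const.prodMk (continuous_const.prodMk continuous_id))
      have hcv2 : Continuous (fun v : R2 => fderiv ℝ Φ (t, x + ε • perp v)) :=
        hΦdC.comp (continuous_const.prodMk (continuous_const.add
          (continuous_perp.const_smul ε)))
      have hcv3 : Continuous (fun v : R2 => Φ (t, x + ε • perp v)) :=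
        hΦC.comp (continuous_const.prodMk (continuous_const.add
          (continuous_perp.const_smul ε)))
      have hcv4 : Continuous (fun v : R2 => f (t, x, v)) :=
        hfC.comp (continuous_const.prodMk (continuous_const.prodMk continuous_id))
      have I0 : Integrable (fun v : R2 =>
          fderiv ℝ (fun v' => (-(v' 1)) * (f (t, x, v') * Φ (t, x + ε • perp v'))) v
            (EuclideanSpace.single 0 1)) := by
        have heq : (fun v : R2 =>
            fderiv ℝ (fun v' => (-(v' 1)) * (f (t, x, v') * Φ (t, x + ε • perp v'))) v
              (EuclideanSpace.single 0 1))
            = fun v : R2 => (-(v 1)) * (fderiv ℝ f (t, x, v) (0, 0, EuclideanSpace.single 0 1)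
                * Φ (t, x + ε • perp v)
              + f (t, x, v) * fderiv ℝ Φ (t, x + ε • perp v)
                  (0, ε • perp (EuclideanSpace.single 0 1))) := funext fun v => hD0pt x v
        rw [heq]
        refine hIntV x _ ((((EuclideanSpace.proj (1 : Fin 2) : R2 →L[ℝ] ℝ).continuous.neg).mul
          (((hcv1.clm_apply continuous_const).mul hcv3).add
            (hcv4.mul (hcv2.clm_apply continuous_const))))) (fun v h => ?_)
        rw [hfd0 t ht x v h, hsupp t htI x v h.le]; simp
      have I1 : Integrable (fun v : R2 =>
          fderiv ℝ (fun v' => (v' 0) * (f (t, x, v') * Φ (t, x + ε • perp v'))) v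
            (EuclideanSpace.single 1 1)) := by
        have heq : (fun v : R2 =>
            fderiv ℝ (fun v' => (v' 0) * (f (t, x, v') * Φ (t, x + ε • perp v'))) v
              (EuclideanSpace.single 1 1))
            = fun v : R2 => (v 0) * (fderiv ℝ f (t, x, v) (0, 0, EuclideanSpace.single 1 1)
                * Φ (t, x + ε • perp v)
              + f (t, x, v) * fderiv ℝ Φ (t, x + ε • perp v)
                  (0, ε • perp (EuclideanSpace.single 1 1))) := funext fun v => hD1pt x v
        rw [heq]
        refine hIntV x _ (((EuclideanSpace.proj (0 : Fin 2) : R2 →L[ℝ] ℝ).continuous.mul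
          (((hcv1.clm_apply continuous_const).mul hcv3).add
            (hcv4.mul (hcv2.clm_apply continuous_const))))) (fun v h => ?_)
        rw [hfd0 t ht x v h, hsupp t htI x v h.le]; simp
      have h0C : ContDiff ℝ 1
          (fun v : R2 => (-(v 1)) * (f (t, x, v) * Φ (t, x + ε • perp v))) :=
        ((EuclideanSpace.proj (1 : Fin 2) : R2 →L[ℝ] ℝ).contDiff.neg).mul (hsecvC t x)
      have h1C : ContDiff ℝ 1
          (fun v : R2 => (v 0) * (f (t, x, v) * Φ (t, x + ε • perp v))) :=
        (EuclideanSpace.proj (0 : Fin 2) : R2 →L[ℝ] ℝ).contDiff.mul (hsecvC t x)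
      have h0S : HasCompactSupport
          (fun v : R2 => (-(v 1)) * (f (t, x, v) * Φ (t, x + ε • perp v))) := by
        apply HasCompactSupport.intro (isCompact_closedBall (0:R2) R)
        intro v hv
        simp only [Metric.mem_closedBall, dist_zero_right, not_le] at hv
        have hz : f (t, x, v) = 0 := hsupp t htI x v (by nlinarith [norm_nonneg x])
        simp [hz]
      have h1S : HasCompactSupport
          (fun v : R2 => (v 0) * (f (t, x, v) * Φ (t, x + ε • perp v))) := by
        apply HasCompactSupport.intro (isCompact_closedBall (0:R2) R)
        intro v hv
        simp only [Metric.mem_closedBall, dist_zero_right, not_le] at hv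
        have hz : f (t, x, v) = 0 := hsupp t htI x v (by nlinarith [norm_nonneg x])
        simp [hz]
      calc (∫ v : R2,
          ((-(v 1)) * (fderiv ℝ f (t, x, v) (0, 0, EuclideanSpace.single 0 1)
              * Φ (t, x + ε • perp v)
            + f (t, x, v) * fderiv ℝ Φ (t, x + ε • perp v)
                (0, ε • perp (EuclideanSpace.single 0 1)))
          + (v 0) * (fderiv ℝ f (t, x, v) (0, 0, EuclideanSpace.single 1 1)
              * Φ (t, x + ε • perp v)
            + f (t, x, v) * fderiv ℝ Φ (t, x + ε • perp v)
                (0, ε • perp (EuclideanSpace.single 1 1)))))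
          = ∫ v : R2,
            (fderiv ℝ (fun v' => (-(v' 1)) * (f (t, x, v') * Φ (t, x + ε • perp v'))) v
                (EuclideanSpace.single 0 1)
              + fderiv ℝ (fun v' => (v' 0) * (f (t, x, v') * Φ (t, x + ε • perp v'))) v
                (EuclideanSpace.single 1 1)) := by
            congr 1; funext v; rw [hD0pt x v, hD1pt x v]
        _ = (∫ v : R2,
              fderiv ℝ (fun v' => (-(v' 1)) * (f (t, x, v') * Φ (t, x + ε • perp v'))) v
                (EuclideanSpace.single 0 1))
            + ∫ v : R2,
              fderiv ℝ (fun v' => (v' 0) * (f (t, x, v') * Φ (t, x + ε • perp v'))) v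
                (EuclideanSpace.single 1 1) := integral_add I0 I1
        _ = 0 := by
            rw [integral_fderiv_apply_eq_zero _ h0C h0S, integral_fderiv_apply_eq_zero _ h1C h1S]
            ring
    simp only [inner, integral_zero]
  -- identification of the two target integrals
  have hfirst : (∫ x, (∫ v, f (t, x - ε • perp v, v)) * deriv (fun s => Φ (s, x)) t)
      = ∫ p : R2 × R2, f (t, p.1, p.2) * fderiv ℝ Φ (t, p.1 + ε • perp p.2) (1, 0) := by
    calc (∫ x, (∫ v, f (t, x - ε • perp v, v)) * deriv (fun s => Φ (s, x)) t)
        = ∫ x, (∫ v, f (t, x - ε • perp v, v)) * fderiv ℝ Φ (t, x) (1, 0) := by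
          congr 1; funext x
          rw [(hΦt t x).deriv]
      _ = ∫ p : R2 × R2, f (t, p.1, p.2) * fderiv ℝ Φ (t, p.1 + ε • perp p.2) (1, 0) :=
          change_of_var ε R (fun p => f (t, p.1, p.2)) hc4
            (fun x v h => hsupp t htI x v h)
            (fun x => fderiv ℝ Φ (t, x) (1, 0))
            ((hΦdC.comp (continuous_const.prodMk continuous_id)).clm_apply continuous_const)
  have hsecond : (∫ x, ∫ v, f (t, x, v)
        * fderiv ℝ (fun z => Φ (t, z)) (x + ε • perp v) (perp (E (t, x))))
      = ∫ p : R2 × R2, f (t, p.1, p.2)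
          * fderiv ℝ Φ (t, p.1 + ε • perp p.2) (0, perp (E (t, p.1))) := by
    have hG2i' : Integrable (fun p : R2 × R2 => f (t, p.1, p.2)
        * fderiv ℝ Φ (t, p.1 + ε • perp p.2) (0, perp (E (t, p.1)))) (volume.prod volume) := by
      rw [← Measure.volume_eq_prod R2 R2]; exact G2I
    calc (∫ x, ∫ v, f (t, x, v)
          * fderiv ℝ (fun z => Φ (t, z)) (x + ε • perp v) (perp (E (t, x))))
        = ∫ x, ∫ v, f (t, x, v)
            * fderiv ℝ Φ (t, x + ε • perp v) (0, perp (E (t, x))) := by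
          congr 1; funext x; congr 1; funext v
          rw [hΦpart t (x + ε • perp v) (perp (E (t, x)))]
      _ = ∫ p, (fun p : R2 × R2 => f (t, p.1, p.2)
            * fderiv ℝ Φ (t, p.1 + ε • perp p.2) (0, perp (E (t, p.1)))) p
            ∂(volume.prod volume) := (integral_prod _ hG2i').symm
      _ = ∫ p : R2 × R2, f (t, p.1, p.2)
            * fderiv ℝ Φ (t, p.1 + ε • perp p.2) (0, perp (E (t, p.1))) := by
          rw [← Measure.volume_eq_prod R2 R2]
  have hTaG2 : (∫ p : R2 × R2, fderiv ℝ f (t, p.1, p.2) (1, 0, 0) * Φ (t, p.1 + ε • perp p.2))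
      = ∫ p : R2 × R2, f (t, p.1, p.2)
          * fderiv ℝ Φ (t, p.1 + ε • perp p.2) (0, perp (E (t, p.1))) := by
    calc (∫ p : R2 × R2, fderiv ℝ f (t, p.1, p.2) (1, 0, 0) * Φ (t, p.1 + ε • perp p.2))
        = ∫ p : R2 × R2,
            ((f (t, p.1, p.2) * fderiv ℝ Φ (t, p.1 + ε • perp p.2) (0, perp (E (t, p.1)))
            - (fderiv ℝ f (t, p.1, p.2) (0, ε⁻¹ • p.2, 0) * Φ (t, p.1 + ε • perp p.2)
                + f (t, p.1, p.2) * fderiv ℝ Φ (t, p.1 + ε • perp p.2) (0, ε⁻¹ • p.2)))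
            - (fderiv ℝ f (t, p.1, p.2) (0, 0, ε⁻¹ • E (t, p.1)) * Φ (t, p.1 + ε • perp p.2)
                + f (t, p.1, p.2) * fderiv ℝ Φ (t, p.1 + ε • perp p.2) (0, perp (E (t, p.1))))
            - (ε ^ 2)⁻¹ * ((-(p.2 1)) * (fderiv ℝ f (t, p.1, p.2)
                  (0, 0, EuclideanSpace.single 0 1) * Φ (t, p.1 + ε • perp p.2)
                + f (t, p.1, p.2) * fderiv ℝ Φ (t, p.1 + ε • perp p.2)
                    (0, ε • perp (EuclideanSpace.single 0 1)))
              + (p.2 0) * (fderiv ℝ f (t, p.1, p.2)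
                  (0, 0, EuclideanSpace.single 1 1) * Φ (t, p.1 + ε • perp p.2)
                + f (t, p.1, p.2) * fderiv ℝ Φ (t, p.1 + ε • perp p.2)
                    (0, ε • perp (EuclideanSpace.single 1 1))))) := by
          congr 1; funext p; exact hmaster p.1 p.2
      _ = ∫ p : R2 × R2, f (t, p.1, p.2)
            * fderiv ℝ Φ (t, p.1 + ε • perp p.2) (0, perp (E (t, p.1))) := by
          have i1 : Integrable (fun p : R2 × R2 => f (t, p.1, p.2) * fderiv ℝ Φ (t, p.1 + ε • perp p.2) (0, perp (E (t, p.1))) - (fderiv ℝ f (t, p.1, p.2) (0, ε⁻¹ • p.2, 0) * Φ (t, p.1 + ε • perp p.2) + f (t, p.1, p.2) * fderiv ℝ Φ (t, p.1 + ε • perp p.2) (0, ε⁻¹ • p.2))) := G2I.sub A1I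
          have i2 : Integrable (fun p : R2 × R2 => (f (t, p.1, p.2) * fderiv ℝ Φ (t, p.1 + ε • perp p.2) (0, perp (E (t, p.1))) - (fderiv ℝ f (t, p.1, p.2) (0, ε⁻¹ • p.2, 0) * Φ (t, p.1 + ε • perp p.2) + f (t, p.1, p.2) * fderiv ℝ Φ (t, p.1 + ε • perp p.2) (0, ε⁻¹ • p.2))) - (fderiv ℝ f (t, p.1, p.2) (0, 0, ε⁻¹ • E (t, p.1)) * Φ (t, p.1 + ε • perp p.2) + f (t, p.1, p.2) * fderiv ℝ Φ (t, p.1 + ε • perp p.2) (0, perp (E (t, p.1))))) := i1.sub A2I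
          have i3 : Integrable (fun p : R2 × R2 => (ε ^ 2)⁻¹ * ((-(p.2 1)) * (fderiv ℝ f (t, p.1, p.2) (0, 0, EuclideanSpace.single 0 1) * Φ (t, p.1 + ε • perp p.2) + f (t, p.1, p.2) * fderiv ℝ Φ (t, p.1 + ε • perp p.2) (0, ε • perp (EuclideanSpace.single 0 1))) + (p.2 0) * (fderiv ℝ f (t, p.1, p.2) (0, 0, EuclideanSpace.single 1 1) * Φ (t, p.1 + ε • perp p.2) + f (t, p.1, p.2) * fderiv ℝ Φ (t, p.1 + ε • perp p.2) (0, ε • perp (EuclideanSpace.single 1 1))))) := WI.const_mul _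
          rw [integral_sub i2 i3, integral_sub i1 A2I, integral_sub G2I A1I,
            integral_const_mul, hA1zero, hA2zero, hWzero]
          ring
  -- differentiation under the integral sign
  set δ : ℝ := min (t / 2) ((T - t) / 2) with hδdef
  have hδ0 : 0 < δ := lt_min (by linarith [ht.1]) (by linarith [ht.2])
  have hballsub : Metric.ball t δ ⊆ Set.Ioo 0 T := by
    intro s hs
    rw [Metric.mem_ball, Real.dist_eq] at hs
    have h1 := abs_lt.1 hs
    have h2 : δ ≤ t / 2 := min_le_left _ _
    have h3 : δ ≤ (T - t) / 2 := min_le_right _ _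
    constructor
    · linarith [ht.1]
    · linarith [ht.2]
  have hF'cont : Continuous (fun q : ℝ × (R2 × R2) =>
      fderiv ℝ f (q.1, q.2.1, q.2.2) (1, 0, 0) * Φ (q.1, q.2.1 + ε • perp q.2.2)
        + f (q.1, q.2.1, q.2.2) * fderiv ℝ Φ (q.1, q.2.1 + ε • perp q.2.2) (1, 0)) := by
    have hm1 : Continuous (fun q : ℝ × (R2 × R2) => ((q.1, q.2.1, q.2.2) : ℝ × R2 × R2)) :=
      continuous_fst.prodMk ((continuous_fst.comp continuous_snd).prodMk
        (continuous_snd.comp continuous_snd))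
    have hm2 : Continuous (fun q : ℝ × (R2 × R2) => ((q.1, q.2.1 + ε • perp q.2.2) : ℝ × R2)) :=
      continuous_fst.prodMk (hPtC.comp continuous_snd)
    exact (((hfdC.comp hm1).clm_apply continuous_const).mul (hΦC.comp hm2)).add
      ((hfC.comp hm1).mul ((hΦdC.comp hm2).clm_apply continuous_const))
  obtain ⟨C, hC⟩ := ((isCompact_Icc (a := t - δ) (b := t + δ)).prod
      ((isCompact_closedBall (0:R2) R).prod
        (isCompact_closedBall (0:R2) R))).exists_bound_of_continuousOn
      hF'cont.continuousOn
  have key := hasDerivAt_integral_of_dominated_loc_of_deriv_le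
    (μ := (volume : Measure (R2 × R2)))
    (F := fun s p => f (s, p.1, p.2) * Φ (s, p.1 + ε • perp p.2))
    (F' := fun s p => fderiv ℝ f (s, p.1, p.2) (1, 0, 0) * Φ (s, p.1 + ε • perp p.2)
      + f (s, p.1, p.2) * fderiv ℝ Φ (s, p.1 + ε • perp p.2) (1, 0))
    (x₀ := t)
    (bound := Set.indicator ((Metric.closedBall (0:R2) R) ×ˢ (Metric.closedBall (0:R2) R))
      (fun _ => C))
    (Metric.ball_mem_nhds t hδ0)
    (Filter.Eventually.of_forall fun s =>
      ((hfC.comp (continuous_const.prodMk (continuous_fst.prodMk continuous_snd))).mul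
        (hΦC.comp (continuous_const.prodMk hPtC))).aestronglyMeasurable)
    (by
      refine hIntKey _ ((hfC.comp (continuous_const.prodMk
        (continuous_fst.prodMk continuous_snd))).mul
        (hΦC.comp (continuous_const.prodMk hPtC))) (fun x v h => ?_)
      show f (t, x, v) * Φ (t, x + ε • perp v) = 0
      rw [hsupp t htI x v h.le]; simp)
    ((((hc1.clm_apply continuous_const).mul hc3).add
      (hc4.mul (hc2.clm_apply continuous_const))).aestronglyMeasurable)
    (by
      refine Filter.Eventually.of_forall fun p => fun s hs => ?_
      by_cases hp : p ∈ (Metric.closedBall (0:R2) R) ×ˢ (Metric.closedBall (0:R2) R)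
      · rw [Set.indicator_of_mem hp]
        have hs' : s ∈ Set.Icc (t - δ) (t + δ) := by
          rw [Metric.mem_ball, Real.dist_eq] at hs
          have := abs_lt.1 hs
          constructor <;> linarith
        exact hC (s, p) ⟨hs', hp⟩
      · rw [Set.indicator_of_notMem hp]
        have hsum : R < ‖p.1‖ + ‖p.2‖ := by
          simp only [Set.mem_prod, Metric.mem_closedBall, dist_zero_right, not_and_or,
            not_le] at hp
          rcases hp with h | h
          · nlinarith [norm_nonneg p.2]
          · nlinarith [norm_nonneg p.1]
        have hsIoo : s ∈ Set.Ioo (0:ℝ) T := hballsub hs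
        show ‖fderiv ℝ f (s, p.1, p.2) (1, 0, 0) * Φ (s, p.1 + ε • perp p.2)
          + f (s, p.1, p.2) * fderiv ℝ Φ (s, p.1 + ε • perp p.2) (1, 0)‖ ≤ 0
        rw [hfd0 s hsIoo p.1 p.2 hsum,
          hsupp s ⟨hsIoo.1.le, hsIoo.2.le⟩ p.1 p.2 hsum.le]
        simp)
    (by
      refine (integrable_indicator_iff
        (measurableSet_closedBall.prod measurableSet_closedBall)).2 ?_
      refine integrableOn_const (lt_top_iff_ne_top.1 ?_)
      exact ((isCompact_closedBall (0:R2) R).prod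
        (isCompact_closedBall (0:R2) R)).measure_lt_top)
    (Filter.Eventually.of_forall fun p => fun s _ =>
      (hft s p.1 p.2).mul (hΦt s (p.1 + ε • perp p.2)))
  have hval : (∫ p : R2 × R2,
      (fderiv ℝ f (t, p.1, p.2) (1, 0, 0) * Φ (t, p.1 + ε • perp p.2)
        + f (t, p.1, p.2) * fderiv ℝ Φ (t, p.1 + ε • perp p.2) (1, 0)))
      = (∫ x, (∫ v, f (t, x - ε • perp v, v)) * deriv (fun s => Φ (s, x)) t)
        + ∫ x, ∫ v, f (t, x, v)
            * fderiv ℝ (fun z => Φ (t, z)) (x + ε • perp v) (perp (E (t, x))) := by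
    rw [integral_add TaI TbI, hTaG2, hfirst, hsecond]
    ring
  have hfinal := key.2
  rw [hval] at hfinal
  refine hfinal.congr_of_eventuallyEq ?_
  filter_upwards [isOpen_Ioo.mem_nhds ht] with s hs
  exact change_of_var ε R (fun p => f (s, p.1, p.2))
    (hfC.comp (continuous_const.prodMk (continuous_fst.prodMk continuous_snd)))
    (fun x v h => hsupp s ⟨hs.1.le, hs.2.le⟩ x v h)
    (fun x => Φ (s, x)) (hΦC.comp (continuous_const.prodMk continuous_id))
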